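/- Let d ≥ 1, K ≥ 0, and let φ : ℝ^d → ℝ be K-Lipschitz. Fix t > 0 and set ψ_t(y) = ‖y‖²/2 + t·φ(y), ψ_t*(x) = sup_y (⟨x,y⟩ − ψ_t(y)), ψ_t**(y) = sup_x (⟨x,y⟩ − ψ_t*(x)), and Θ_t = {y : ψ_t**(y) = ψ_t(y)}. Then: (i) at every point y where ψ_t** is differentiable, ‖∇ψ_t**(y) − y‖ ≤ Kt; (ii) if y ∈ Θ_t and φ is differentiable at y, then ψ_t** is differentiable at y and ∇ψ_t**(y) = y + t·∇φ(y). -/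

import Mathlib

open scoped RealInnerProductSpace
noncomputable section

/-- Legendre transform: `f*(x) = sup_y (⟨x,y⟩ − f(y))`. -/
def conj {d : ℕ} (f : EuclideanSpace ℝ (Fin d) → ℝ)
    (x : EuclideanSpace ℝ (Fin d)) : ℝ :=
  ⨆ y : EuclideanSpace ℝ (Fin d), (⟪x, y⟫ - f y)

/-- `ψ_t(y) = ‖y‖²/2 + t φ(y)`. -/
def psiFun {d : ℕ} (φ : EuclideanSpace ℝ (Fin d) → ℝ) (t : ℝ)
    (y : EuclideanSpace ℝ (Fin d)) : ℝ :=
  ‖y‖ ^ 2 / 2 + t * φ y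

/-!
Write `q = ‖·‖²/2`. The Legendre transform preserves the class of functions `f` for which
`f - q` is `L`-Lipschitz: shifting the test point `y` by `x' - x` shows that `f*(x')` exceeds
`f*(x)` by at most `(‖x'‖² - ‖x‖²)/2 + L‖x' - x‖`. Since `ψ_t - q = tφ` is `Kt`-Lipschitz, so is
`ψ_t** - q`, and the derivative of an `L`-Lipschitz function has norm at most `L`; this is (i).

For (ii), `ψ_t**` is a convex minorant of `ψ_t` touching it at `y`. A convex function lying
below a function differentiable at `y` and touching it there is differentiable at `y` with the
same derivative: the upper Taylor bound comes from the minorant property, the lower one from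
midpoint convexity, `2 f(y) ≤ f(y + h) + f(y - h)`.
-/

open Set Asymptotics Topology Gradient
open scoped NNReal

theorem HasFDerivAt.of_convexOn_of_le_of_eq {E : Type*} [NormedAddCommGroup E] [NormedSpace ℝ E]
    {f g : E → ℝ} {g' : E →L[ℝ] ℝ} {y : E} (hg : HasFDerivAt g g' y) (hf : ConvexOn ℝ univ f)
    (hle : ∀ z, f z ≤ g z) (heq : f y = g y) : HasFDerivAt f g' y := by
  rw [hasFDerivAt_iff_isLittleO_nhds_zero] at hg ⊢
  set ρ := fun h => g (y + h) - g y - g' h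
  have hρ_neg : (fun h => ρ (-h)) =o[𝓝 0] fun h => h := by
    have := hg.comp_tendsto (by simpa using (continuous_neg (G := E)).tendsto 0)
    exact isLittleO_neg_right.1 this
  have hmid : ∀ h, 2 * f y ≤ f (y + h) + f (y - h) := fun h => by
    have := hf.2 (mem_univ (y + h)) (mem_univ (y - h)) (by norm_num : (0 : ℝ) ≤ 1 / 2)
      (by norm_num : (0 : ℝ) ≤ 1 / 2) (by norm_num)
    rw [show (1 / 2 : ℝ) • (y + h) + (1 / 2 : ℝ) • (y - h) = y by module] at this
    simp only [smul_eq_mul] at this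
    linarith
  refine (isBigO_of_le _ fun h => ?_).trans_isLittleO (hg.norm_left.add hρ_neg.norm_left)
  have hρ : ρ h = g (y + h) - g y - g' h := rfl
  have hρ' : ρ (-h) = g (y - h) - g y + g' h := by simp [ρ, sub_eq_add_neg]
  clear_value ρ
  rw [Real.norm_of_nonneg (by positivity : 0 ≤ ‖ρ h‖ + ‖ρ (-h)‖), Real.norm_eq_abs, abs_le,
    Real.norm_eq_abs, Real.norm_eq_abs]
  constructor <;> linarith [hle (y + h), hle (y - h), hmid h, le_abs_self (ρ h),
    le_abs_self (ρ (-h)), abs_nonneg (ρ h), abs_nonneg (ρ (-h))]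

section HalfNormSq

variable {F : Type*} [NormedAddCommGroup F] [InnerProductSpace ℝ F]

theorem hasFDerivAt_half_norm_sq (y : F) :
    HasFDerivAt (fun z : F => ‖z‖ ^ 2 / 2) (innerSL ℝ y) y := by
  have h := HasFDerivAt.mul_const (hasStrictFDerivAt_norm_sq y).hasFDerivAt (2⁻¹ : ℝ)
  simp only [← div_eq_mul_inv] at h
  exact h.congr_fderiv (by ext z; simp)

theorem norm_gradient_sub_le_of_lipschitzWith [CompleteSpace F] {f : F → ℝ} {y : F} {L : ℝ≥0}
    (hf : DifferentiableAt ℝ f y) (hL : LipschitzWith L fun z => f z - ‖z‖ ^ 2 / 2) :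
    ‖∇ f y - y‖ ≤ L := by
  have h : HasGradientAt (fun z => f z - ‖z‖ ^ 2 / 2) (∇ f y - y) y := by
    rw [hasGradientAt_iff_hasFDerivAt, map_sub]
    exact hf.hasGradientAt.hasFDerivAt.sub (hasFDerivAt_half_norm_sq y)
  simpa only [LinearIsometryEquiv.norm_map] using h.hasFDerivAt.le_of_lipschitz hL

end HalfNormSq

section Conj

variable {d : ℕ} {f : EuclideanSpace ℝ (Fin d) → ℝ} {L : ℝ≥0}

theorem bddAbove_range_inner_sub (hf : LipschitzWith L fun y => f y - ‖y‖ ^ 2 / 2)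
    (x : EuclideanSpace ℝ (Fin d)) : BddAbove (range fun y => ⟪x, y⟫ - f y) := by
  refine ⟨(‖x‖ + L) ^ 2 / 2 - f 0, forall_mem_range.2 fun y => ?_⟩
  have hf0 := hf.le_add_mul 0 y
  simp only [norm_zero, dist_zero_left] at hf0
  nlinarith [real_inner_le_norm x y, sq_nonneg (‖x‖ + L - ‖y‖)]

theorem inner_sub_le_conj (hf : LipschitzWith L fun y => f y - ‖y‖ ^ 2 / 2)
    (x y : EuclideanSpace ℝ (Fin d)) : ⟪x, y⟫ - f y ≤ conj f x :=
  le_ciSup (bddAbove_range_inner_sub hf x) y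

theorem conj_conj_le (hf : LipschitzWith L fun y => f y - ‖y‖ ^ 2 / 2)
    (y : EuclideanSpace ℝ (Fin d)) : conj (conj f) y ≤ f y :=
  ciSup_le fun x => by linarith [real_inner_comm x y, inner_sub_le_conj hf x y]

theorem convexOn_conj (hf : LipschitzWith L fun y => f y - ‖y‖ ^ 2 / 2) :
    ConvexOn ℝ univ (conj f) := by
  refine ⟨convex_univ, fun x _ z _ a b ha hb hab => ciSup_le fun y => ?_⟩
  have hx := mul_le_mul_of_nonneg_left (inner_sub_le_conj hf x y) ha
  have hz := mul_le_mul_of_nonneg_left (inner_sub_le_conj hf z y) hb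
  rw [inner_add_left, real_inner_smul_left, real_inner_smul_left, smul_eq_mul, smul_eq_mul]
  linear_combination hx + hz + f y * hab

theorem lipschitzWith_conj_sub_half_sq (hf : LipschitzWith L fun y => f y - ‖y‖ ^ 2 / 2) :
    LipschitzWith L fun x => conj f x - ‖x‖ ^ 2 / 2 := by
  refine LipschitzWith.of_le_add_mul L fun x' x => ?_
  suffices conj f x' ≤ conj f x + (‖x'‖ ^ 2 - ‖x‖ ^ 2) / 2 + L * ‖x' - x‖ by
    rw [dist_eq_norm]; linarith
  refine ciSup_le fun y => ?_
  set z := y - (x' - x)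
  have hlip := hf.le_add_mul z y
  rw [dist_eq_norm, show z - y = -(x' - x) by simp [z], norm_neg] at hlip
  have e1 := norm_sub_sq_real x' y
  have e2 := norm_sub_sq_real x z
  rw [show x - z = x' - y by simp [z]; abel] at e2
  linarith [inner_sub_le_conj hf x z]

end Conj

section PsiFun

variable {d : ℕ} {φ : EuclideanSpace ℝ (Fin d) → ℝ} {t : ℝ}

theorem lipschitzWith_psiFun_sub_half_sq {K : ℝ} (hφ : ∀ y z, |φ y - φ z| ≤ K * ‖y - z‖)
    (ht : 0 ≤ t) : LipschitzWith (Real.toNNReal (K * t)) fun y => psiFun φ t y - ‖y‖ ^ 2 / 2 := by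
  refine LipschitzWith.of_le_add_mul' (K * t) fun y z => ?_
  have h := mul_le_mul_of_nonneg_left (abs_sub_le_iff.1 (hφ y z)).1 ht
  simp only [psiFun, dist_eq_norm]
  linarith

theorem hasGradientAt_psiFun {y : EuclideanSpace ℝ (Fin d)} (hφ : DifferentiableAt ℝ φ y) :
    HasGradientAt (psiFun φ t) (y + t • ∇ φ y) y := by
  rw [hasGradientAt_iff_hasFDerivAt, map_add, map_smul, toDual_gradient]
  exact (hasFDerivAt_half_norm_sq y).add (hφ.hasFDerivAt.const_mul t)

end PsiFun

theorem stmt15_general (d : ℕ) (K : ℝ) (hK : 0 ≤ K)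
    (φ : EuclideanSpace ℝ (Fin d) → ℝ)
    (hLip : ∀ y z, |φ y - φ z| ≤ K * ‖y - z‖)
    (t : ℝ) (ht : 0 < t) :
    (∀ y : EuclideanSpace ℝ (Fin d),
      DifferentiableAt ℝ (conj (conj (psiFun φ t))) y →
        ‖gradient (conj (conj (psiFun φ t))) y - y‖ ≤ K * t) ∧
    (∀ y : EuclideanSpace ℝ (Fin d),
      conj (conj (psiFun φ t)) y = psiFun φ t y →
      DifferentiableAt ℝ φ y →
        DifferentiableAt ℝ (conj (conj (psiFun φ t))) y ∧
        gradient (conj (conj (psiFun φ t))) y = y + t • gradient φ y) := by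
  have hψ := lipschitzWith_psiFun_sub_half_sq hLip ht.le
  have hψ_conj := lipschitzWith_conj_sub_half_sq hψ
  refine ⟨fun y hy => ?_, fun y hy hφ => ?_⟩
  · simpa only [Real.coe_toNNReal _ (mul_nonneg hK ht.le)] using
      norm_gradient_sub_le_of_lipschitzWith hy (lipschitzWith_conj_sub_half_sq hψ_conj)
  · have h := hasGradientAt_iff_hasFDerivAt.2 <|
      (hasGradientAt_psiFun (t := t) hφ).hasFDerivAt.of_convexOn_of_le_of_eq
        (convexOn_conj hψ_conj) (conj_conj_le hψ) hy
    exact ⟨h.differentiableAt, h.gradient⟩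

theorem stmt15 (d : ℕ) (hd : 1 ≤ d) (K : ℝ) (hK : 0 ≤ K)
    (φ : EuclideanSpace ℝ (Fin d) → ℝ)
    (hLip : ∀ y z, |φ y - φ z| ≤ K * ‖y - z‖)
    (t : ℝ) (ht : 0 < t) :
    (∀ y : EuclideanSpace ℝ (Fin d),
      DifferentiableAt ℝ (conj (conj (psiFun φ t))) y →
        ‖gradient (conj (conj (psiFun φ t))) y - y‖ ≤ K * t) ∧
    (∀ y : EuclideanSpace ℝ (Fin d),
      conj (conj (psiFun φ t)) y = psiFun φ t y →
      DifferentiableAt ℝ φ y →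
        DifferentiableAt ℝ (conj (conj (psiFun φ t))) y ∧
        gradient (conj (conj (psiFun φ t))) y = y + t • gradient φ y) :=
  stmt15_general d K hK φ hLip t ht
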